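/- Let rings A and B be symmetric separably equivalent with context (P, Q, ν, μ). Then ${}_AP_B$ is a Frobenius bimodule: P is left and right finite projective, and the maps q ↦ μ(q ⊗ −) and q ↦ ν(− ⊗ q) are B-A-bimodule isomorphisms Hom_B(P_B, B_B) ≅ Q ≅ Hom_A({}_AP, {}_AA); in particular Hom_B(P_B, B_B) ≅ Hom_A({}_AP, {}_AA) as B-A-bimodules. -/

import Mathlib

/-! ### A balanced tensor product of a right module and a left module
over a possibly noncommutative ring, constructed as a quotient of the
`ℤ`-tensor product. -/

open MulOpposite
open scoped TensorProduct

section BalCore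

variable (R : Type*) [Ring R] (M : Type*) [AddCommGroup M] [Module Rᵐᵒᵖ M]
  (N : Type*) [AddCommGroup N] [Module R N]

/-- The subgroup of relations defining the balanced tensor product. -/
def balRel : Submodule ℤ (TensorProduct ℤ M N) :=
  Submodule.span ℤ {x | ∃ (m : M) (r : R) (n : N), x = (op r • m) ⊗ₜ[ℤ] n - m ⊗ₜ[ℤ] (r • n)}

/-- The balanced tensor product `M ⊗[R] N` of a right `R`-module `M` and a
left `R`-module `N`. -/
def Bal : Type _ := TensorProduct ℤ M N ⧸ balRel R M N

noncomputable instance : AddCommGroup (Bal R M N) := Submodule.Quotient.addCommGroup _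

variable {M N}

/-- The canonical image of `m ⊗ n` in the balanced tensor product. -/
noncomputable def Bal.tmul (m : M) (n : N) : Bal R M N := Submodule.Quotient.mk (m ⊗ₜ[ℤ] n)

theorem Bal.add_tmul (m m' : M) (n : N) :
    Bal.tmul R (m + m') n = Bal.tmul R m n + Bal.tmul R m' n := by
  show Submodule.Quotient.mk _ = _
  rw [TensorProduct.add_tmul]
  rfl

theorem Bal.tmul_add (m : M) (n n' : N) :
    Bal.tmul R m (n + n') = Bal.tmul R m n + Bal.tmul R m n' := by
  show Submodule.Quotient.mk _ = _
  rw [TensorProduct.tmul_add]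
  rfl

theorem Bal.zero_tmul (n : N) : Bal.tmul R (0 : M) n = 0 := by
  show Submodule.Quotient.mk _ = _
  rw [TensorProduct.zero_tmul]
  rfl

theorem Bal.tmul_zero (m : M) : Bal.tmul R m (0 : N) = 0 := by
  show Submodule.Quotient.mk _ = _
  rw [TensorProduct.tmul_zero]
  rfl

/-- The fundamental balancing relation `(m · r) ⊗ n = m ⊗ (r · n)`. -/
theorem Bal.op_smul_tmul (m : M) (r : R) (n : N) :
    Bal.tmul R (op r • m) n = Bal.tmul R m (r • n) :=
  (Submodule.Quotient.eq _).2 (Submodule.subset_span ⟨m, r, n, rfl⟩)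

theorem Bal.induction_on {C : Bal R M N → Prop} (x : Bal R M N) (zero : C 0)
    (tmul : ∀ m n, C (Bal.tmul R m n)) (add : ∀ x y, C x → C y → C (x + y)) : C x := by
  obtain ⟨y, rfl⟩ := Submodule.Quotient.mk_surjective _ x
  induction y using TensorProduct.induction_on with
  | zero => exact zero
  | tmul m n => exact tmul m n
  | add a b ha hb =>
      have : (Submodule.Quotient.mk (a + b) : Bal R M N)
          = Submodule.Quotient.mk a + Submodule.Quotient.mk b := rfl
      rw [this]; exact add _ _ ha hb

/-- Lift a balanced biadditive map to the balanced tensor product. -/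
noncomputable def Bal.liftFun {T : Type*} [AddCommGroup T] (f : M → N → T)
    (h1 : ∀ m m' n, f (m + m') n = f m n + f m' n)
    (h2 : ∀ m n n', f m (n + n') = f m n + f m n')
    (h3 : ∀ (m : M) (r : R) (n : N), f (op r • m) n = f m (r • n)) : Bal R M N →+ T :=
  letI f₂ : M →+ N →+ T :=
    AddMonoidHom.mk' (fun m => AddMonoidHom.mk' (f m) (h2 m))
      (fun m m' => AddMonoidHom.ext fun n => h1 m m' n)
  letI bil : M →ₗ[ℤ] N →ₗ[ℤ] T :=
    { toFun := fun m => (f₂ m).toIntLinearMap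
      map_add' := fun m m' => LinearMap.ext fun n => by simp
      map_smul' := fun z m => LinearMap.ext fun n => by
        simp [map_zsmul] }
  ((balRel R M N).liftQ (TensorProduct.lift bil) (by
    rw [balRel, Submodule.span_le]
    rintro x ⟨m, r, n, rfl⟩
    refine (LinearMap.mem_ker).2 ?_
    refine (map_sub (TensorProduct.lift bil) _ _).trans ?_
    simp [bil, f₂, h3 m r n])).toAddMonoidHom

@[simp] theorem Bal.liftFun_tmul {T : Type*} [AddCommGroup T] (f : M → N → T)
    (h1 : ∀ m m' n, f (m + m') n = f m n + f m' n)
    (h2 : ∀ m n n', f m (n + n') = f m n + f m n')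
    (h3 : ∀ (m : M) (r : R) (n : N), f (op r • m) n = f m (r • n)) (m : M) (n : N) :
    Bal.liftFun R f h1 h2 h3 (Bal.tmul R m n) = f m n := by
  simp [Bal.liftFun, Bal.tmul, Submodule.Quotient.mk]
  rfl

theorem Bal.addHom_ext {T : Type*} [AddCommGroup T] {f g : Bal R M N →+ T}
    (h : ∀ m n, f (Bal.tmul R m n) = g (Bal.tmul R m n)) : f = g := by
  ext x
  refine Bal.induction_on R (C := fun z => f z = g z) x (by simp) h
    (fun x y hx hy => by simp only [map_add]; rw [hx, hy])

end BalCore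
section BalModule

variable (R : Type*) [Ring R] {M : Type*} [AddCommGroup M] [Module Rᵐᵒᵖ M]
  {N : Type*} [AddCommGroup N] [Module R N]

section Left

variable {S : Type*} [Ring S] [Module S M] [SMulCommClass S Rᵐᵒᵖ M]

/-- The left action on the balanced tensor product through the first factor. -/
noncomputable def Bal.lsmulHom (s : S) : Bal R M N →+ Bal R M N :=
  Bal.liftFun R (fun m n => Bal.tmul R (s • m) n)
    (fun m m' n => by
      show Bal.tmul R (s • (m + m')) n = Bal.tmul R (s • m) n + Bal.tmul R (s • m') n
      rw [smul_add, Bal.add_tmul])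
    (fun m n n' => Bal.tmul_add R _ n n')
    (fun m r n => by
      show Bal.tmul R (s • op r • m) n = Bal.tmul R (s • m) (r • n)
      rw [smul_comm, Bal.op_smul_tmul])

theorem Bal.lsmulHom_tmul (s : S) (m : M) (n : N) :
    Bal.lsmulHom R (M := M) (N := N) s (Bal.tmul R m n) = Bal.tmul R (s • m) n :=
  Bal.liftFun_tmul R _ _ _ _ m n

noncomputable instance : SMul S (Bal R M N) := ⟨fun s x => Bal.lsmulHom R s x⟩

theorem Bal.lsmul_tmul (s : S) (m : M) (n : N) :
    s • Bal.tmul R m n = Bal.tmul R (s • m) n :=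
  Bal.lsmulHom_tmul R s m n

theorem Bal.lsmul_one : Bal.lsmulHom R (M := M) (N := N) (1 : S) = AddMonoidHom.id _ :=
  Bal.addHom_ext R fun m n => by
    rw [Bal.lsmulHom_tmul, one_smul, AddMonoidHom.id_apply]

theorem Bal.lsmul_mul (s t : S) :
    Bal.lsmulHom R (M := M) (N := N) (s * t) = (Bal.lsmulHom R s).comp (Bal.lsmulHom R t) :=
  Bal.addHom_ext R fun m n => by
    rw [AddMonoidHom.comp_apply, Bal.lsmulHom_tmul, Bal.lsmulHom_tmul, Bal.lsmulHom_tmul,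
      mul_smul]

theorem Bal.lsmul_addsmul (s t : S) :
    Bal.lsmulHom R (M := M) (N := N) (s + t) = Bal.lsmulHom R s + Bal.lsmulHom R t :=
  Bal.addHom_ext R fun m n => by
    rw [AddMonoidHom.add_apply, Bal.lsmulHom_tmul, Bal.lsmulHom_tmul, Bal.lsmulHom_tmul,
      add_smul, Bal.add_tmul]

theorem Bal.lsmul_zerosmul : Bal.lsmulHom R (M := M) (N := N) (0 : S) = 0 :=
  Bal.addHom_ext R fun m n => by
    rw [Bal.lsmulHom_tmul, zero_smul, Bal.zero_tmul, AddMonoidHom.zero_apply]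

noncomputable instance : Module S (Bal R M N) where
  one_smul x := DFunLike.congr_fun (Bal.lsmul_one R (M := M) (N := N) (S := S)) x
  mul_smul s t x := DFunLike.congr_fun (Bal.lsmul_mul R s t) x
  smul_zero s := (Bal.lsmulHom R (M := M) (N := N) s).map_zero
  smul_add s x y := (Bal.lsmulHom R s).map_add x y
  add_smul s t x := DFunLike.congr_fun (Bal.lsmul_addsmul R s t) x
  zero_smul x := DFunLike.congr_fun (Bal.lsmul_zerosmul R (M := M) (N := N) (S := S)) x

end Left

section Right

variable {S : Type*} [Ring S] [Module Sᵐᵒᵖ N] [SMulCommClass R Sᵐᵒᵖ N]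

/-- The right action on the balanced tensor product through the second factor. -/
noncomputable def Bal.rsmulHom (s : Sᵐᵒᵖ) : Bal R M N →+ Bal R M N :=
  Bal.liftFun R (fun m n => Bal.tmul R m (s • n))
    (fun m m' n => Bal.add_tmul R m m' _)
    (fun m n n' => by
      show Bal.tmul R m (s • (n + n')) = Bal.tmul R m (s • n) + Bal.tmul R m (s • n')
      rw [smul_add, Bal.tmul_add])
    (fun m r n => by
      show Bal.tmul R (op r • m) (s • n) = Bal.tmul R m (s • r • n)
      rw [Bal.op_smul_tmul, smul_comm])

theorem Bal.rsmulHom_tmul (s : Sᵐᵒᵖ) (m : M) (n : N) :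
    Bal.rsmulHom R (M := M) (N := N) s (Bal.tmul R m n) = Bal.tmul R m (s • n) :=
  Bal.liftFun_tmul R _ _ _ _ m n

noncomputable instance : SMul Sᵐᵒᵖ (Bal R M N) := ⟨fun s x => Bal.rsmulHom R s x⟩

theorem Bal.rsmul_tmul (s : Sᵐᵒᵖ) (m : M) (n : N) :
    s • Bal.tmul R m n = Bal.tmul R m (s • n) :=
  Bal.rsmulHom_tmul R s m n

theorem Bal.rsmul_one : Bal.rsmulHom R (M := M) (N := N) (1 : Sᵐᵒᵖ) = AddMonoidHom.id _ :=
  Bal.addHom_ext R fun m n => by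
    rw [Bal.rsmulHom_tmul, one_smul, AddMonoidHom.id_apply]

theorem Bal.rsmul_mul (s t : Sᵐᵒᵖ) :
    Bal.rsmulHom R (M := M) (N := N) (s * t) = (Bal.rsmulHom R s).comp (Bal.rsmulHom R t) :=
  Bal.addHom_ext R fun m n => by
    rw [AddMonoidHom.comp_apply, Bal.rsmulHom_tmul, Bal.rsmulHom_tmul, Bal.rsmulHom_tmul,
      mul_smul]

theorem Bal.rsmul_addsmul (s t : Sᵐᵒᵖ) :
    Bal.rsmulHom R (M := M) (N := N) (s + t) = Bal.rsmulHom R s + Bal.rsmulHom R t :=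
  Bal.addHom_ext R fun m n => by
    rw [AddMonoidHom.add_apply, Bal.rsmulHom_tmul, Bal.rsmulHom_tmul, Bal.rsmulHom_tmul,
      add_smul, Bal.tmul_add]

theorem Bal.rsmul_zerosmul : Bal.rsmulHom R (M := M) (N := N) (0 : Sᵐᵒᵖ) = 0 :=
  Bal.addHom_ext R fun m n => by
    rw [Bal.rsmulHom_tmul, zero_smul, Bal.tmul_zero, AddMonoidHom.zero_apply]

noncomputable instance : Module Sᵐᵒᵖ (Bal R M N) where
  one_smul x := DFunLike.congr_fun (Bal.rsmul_one R (M := M) (N := N) (S := S)) x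
  mul_smul s t x := DFunLike.congr_fun (Bal.rsmul_mul R s t) x
  smul_zero s := (Bal.rsmulHom R (M := M) (N := N) s).map_zero
  smul_add s x y := (Bal.rsmulHom R s).map_add x y
  add_smul s t x := DFunLike.congr_fun (Bal.rsmul_addsmul R s t) x
  zero_smul x := DFunLike.congr_fun (Bal.rsmul_zerosmul R (M := M) (N := N) (S := S)) x

end Right

end BalModule
section HomBimodule

variable {A B P Q : Type*} [Ring A] [Ring B]
  [AddCommGroup P] [Module A P] [Module Bᵐᵒᵖ P] [SMulCommClass A Bᵐᵒᵖ P]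
  [AddCommGroup Q] [Module B Q] [Module Aᵐᵒᵖ Q] [SMulCommClass B Aᵐᵒᵖ Q]

/-- Right multiplication by `b` as a left `A`-module endomorphism of `P`. -/
noncomputable def rmulLinear (b : B) : P →ₗ[A] P where
  toFun p := op b • p
  map_add' := smul_add (op b)
  map_smul' a p := (smul_comm a (op b) p).symm

/-- Left multiplication by `a` as a right `B`-module endomorphism of `P`. -/
noncomputable def lmulLinear (a : A) : P →ₗ[Bᵐᵒᵖ] P where
  toFun p := a • p
  map_add' := smul_add a
  map_smul' b p := smul_comm a b p

/-- The right `A`-action (through the domain) on `Hom_B(P_B, B_B)`: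
`(f · a) p = f (a • p)`. -/
noncomputable instance : Module Aᵐᵒᵖ (P →ₗ[Bᵐᵒᵖ] B) where
  smul a f := f.comp (lmulLinear a.unop)
  one_smul f := LinearMap.ext fun p => by
    show f ((1 : Aᵐᵒᵖ).unop • p) = f p
    rw [unop_one, one_smul]
  mul_smul a a' f := LinearMap.ext fun p => by
    show f ((a * a').unop • p) = f (a'.unop • a.unop • p)
    rw [MulOpposite.unop_mul, mul_smul]
  smul_zero a := LinearMap.ext fun p => rfl
  smul_add a f g := LinearMap.ext fun p => rfl
  add_smul a a' f := LinearMap.ext fun p => by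
    show f ((a + a').unop • p) = f (a.unop • p) + f (a'.unop • p)
    rw [MulOpposite.unop_add, add_smul, map_add]
  zero_smul f := LinearMap.ext fun p => by
    show f ((0 : Aᵐᵒᵖ).unop • p) = 0
    rw [MulOpposite.unop_zero, zero_smul, map_zero]

theorem opSmul_homBB_apply (a : A) (f : P →ₗ[Bᵐᵒᵖ] B) (p : P) :
    (op a • f) p = f (a • p) := rfl

/-- The left `B`-action (through the domain) on `Hom_A({}_A P, {}_A A)`:
`(b · f) p = f (p · b)`. -/
noncomputable instance : Module B (P →ₗ[A] A) where
  smul b f := f.comp (rmulLinear b)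
  one_smul f := LinearMap.ext fun p => by
    show f (op (1 : B) • p) = f p
    rw [op_one, one_smul]
  mul_smul b b' f := LinearMap.ext fun p => by
    show f (op (b * b') • p) = f (op b' • op b • p)
    rw [op_mul, mul_smul]
  smul_zero b := LinearMap.ext fun p => rfl
  smul_add b f g := LinearMap.ext fun p => rfl
  add_smul b b' f := LinearMap.ext fun p => by
    show f (op (b + b') • p) = f (op b • p) + f (op b' • p)
    rw [op_add, add_smul, map_add]
  zero_smul f := LinearMap.ext fun p => by
    show f (op (0 : B) • p) = 0
    rw [op_zero, zero_smul, map_zero]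

theorem smul_homAA_apply (b : B) (f : P →ₗ[A] A) (p : P) :
    (b • f) p = f (op b • p) := rfl

noncomputable instance : SMulCommClass B Aᵐᵒᵖ (P →ₗ[A] A) :=
  ⟨fun _ _ _ => LinearMap.ext fun _ => rfl⟩

noncomputable instance : SMulCommClass B Aᵐᵒᵖ (P →ₗ[Bᵐᵒᵖ] B) :=
  ⟨fun _ _ _ => LinearMap.ext fun _ => rfl⟩

/-- The map `Q → Hom_A({}_A P, {}_A A)`, `q ↦ ν(- ⊗ q)`. -/
noncomputable def nuDual (ν : Bal B P Q →+ A)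
    (hνl : ∀ (a : A) (x : Bal B P Q), ν (a • x) = a * ν x) (q : Q) : P →ₗ[A] A where
  toFun p := ν (Bal.tmul B p q)
  map_add' p p' := by
    show ν (Bal.tmul B (p + p') q) = ν (Bal.tmul B p q) + ν (Bal.tmul B p' q)
    rw [Bal.add_tmul, map_add]
  map_smul' a p := by
    show ν (Bal.tmul B (a • p) q) = a • ν (Bal.tmul B p q)
    rw [← Bal.lsmul_tmul, hνl, smul_eq_mul]

@[simp] theorem nuDual_apply (ν : Bal B P Q →+ A)
    (hνl : ∀ (a : A) (x : Bal B P Q), ν (a • x) = a * ν x) (q : Q) (p : P) :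
    nuDual ν hνl q p = ν (Bal.tmul B p q) := rfl

/-- The map `Q → Hom_B(P_B, B_B)`, `q ↦ μ(q ⊗ -)`. -/
noncomputable def muDual (μ : Bal A Q P →+ B)
    (hμr : ∀ (b : B) (y : Bal A Q P), μ (op b • y) = μ y * b) (q : Q) : P →ₗ[Bᵐᵒᵖ] B where
  toFun p := μ (Bal.tmul A q p)
  map_add' p p' := by
    show μ (Bal.tmul A q (p + p')) = μ (Bal.tmul A q p) + μ (Bal.tmul A q p')
    rw [Bal.tmul_add, map_add]
  map_smul' b p := by
    show μ (Bal.tmul A q (b • p)) = b • μ (Bal.tmul A q p)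
    rw [← Bal.rsmul_tmul, MulOpposite.smul_eq_mul_unop]
    conv_lhs => rw [← MulOpposite.op_unop b]
    rw [hμr]

@[simp] theorem muDual_apply (μ : Bal A Q P →+ B)
    (hμr : ∀ (b : B) (y : Bal A Q P), μ (op b • y) = μ y * b) (q : Q) (p : P) :
    muDual μ hμr q p = μ (Bal.tmul A q p) := rfl

end HomBimodule


/-! The pairs `Σ qⱼ ⊗ pⱼ` and `Σ q'ᵢ ⊗ p'ᵢ` act as dual bases. From `q = Σ μ(q ⊗ pⱼ) qⱼ` the
functional `μ(q ⊗ -)` determines `q`, and from `p = Σ pⱼ μ(qⱼ ⊗ p)` every right `B`-linear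
`f : P → B` equals `μ((Σ f(pⱼ) qⱼ) ⊗ -)`; symmetrically for `ν` with the other pair. Hence
`Hom_B(P_B, B_B) ≅ Q ≅ Hom_A({}_A P, {}_A A)` as `B`-`A`-bimodules, and the composite of the
second isomorphism with the inverse of the first identifies the two duals. -/

section DualBases

variable {A B P Q : Type*} [Ring A] [Ring B]
  [AddCommGroup P] [Module A P] [Module Bᵐᵒᵖ P] [SMulCommClass A Bᵐᵒᵖ P] [AddCommGroup Q]

section MuDual

variable [Module Aᵐᵒᵖ Q]
  (μ : Bal A Q P →+ B) (hμr : ∀ (b : B) (y : Bal A Q P), μ (op b • y) = μ y * b)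

theorem muDual_add (q q' : Q) : muDual μ hμr (q + q') = muDual μ hμr q + muDual μ hμr q' :=
  LinearMap.ext fun p => (congrArg μ (Bal.add_tmul A q q' p)).trans (map_add μ _ _)

theorem muDual_op_smul (a : A) (q : Q) : muDual μ hμr (op a • q) = op a • muDual μ hμr q :=
  LinearMap.ext fun p => congrArg μ (Bal.op_smul_tmul A q a p)

variable [Module B Q]

theorem muDual_injective {ι : Type*} [Fintype ι] (pj : ι → P) (qj : ι → Q)
    (hq : ∀ q : Q, ∑ j, μ (Bal.tmul A q (pj j)) • qj j = q) :
    Function.Injective (muDual μ hμr) := fun q q' h => by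
  rw [← hq q, ← hq q']
  exact Finset.sum_congr rfl fun j _ => congrArg (· • qj j) (LinearMap.congr_fun h (pj j))

variable [SMulCommClass B Aᵐᵒᵖ Q]
  (hμl : ∀ (b : B) (y : Bal A Q P), μ (b • y) = b * μ y)
include hμl

theorem muDual_smul (b : B) (q : Q) : muDual μ hμr (b • q) = b • muDual μ hμr q :=
  LinearMap.ext fun p => (congrArg μ (Bal.lsmul_tmul A b q p).symm).trans (hμl b _)

noncomputable def muDualLinearMap : Q →ₗ[B] (P →ₗ[Bᵐᵒᵖ] B) where
  toFun := muDual μ hμr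
  map_add' := muDual_add μ hμr
  map_smul' := muDual_smul μ hμr hμl

theorem muDual_surjective {ι : Type*} [Fintype ι] (pj : ι → P) (qj : ι → Q)
    (hp : ∀ p : P, ∑ j, op (μ (Bal.tmul A (qj j) p)) • pj j = p) :
    Function.Surjective (muDual μ hμr) := fun f => by
  refine ⟨∑ j, f (pj j) • qj j, LinearMap.ext fun p => ?_⟩
  calc muDual μ hμr (∑ j, f (pj j) • qj j) p
      = ∑ j, f (pj j) * μ (Bal.tmul A (qj j) p) := by
        change muDualLinearMap μ hμr hμl _ p = _
        simp only [map_sum, map_smul, LinearMap.sum_apply, LinearMap.smul_apply, smul_eq_mul]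
        rfl
    _ = f (∑ j, op (μ (Bal.tmul A (qj j) p)) • pj j) := by
        simp only [map_sum, map_smul, op_smul_eq_mul]
    _ = f p := by rw [hp]

end MuDual

section NuDual

variable [Module B Q]
  (ν : Bal B P Q →+ A) (hνl : ∀ (a : A) (x : Bal B P Q), ν (a • x) = a * ν x)

theorem nuDual_add (q q' : Q) : nuDual ν hνl (q + q') = nuDual ν hνl q + nuDual ν hνl q' :=
  LinearMap.ext fun p => (congrArg ν (Bal.tmul_add B p q q')).trans (map_add ν _ _)

theorem nuDual_smul (b : B) (q : Q) : nuDual ν hνl (b • q) = b • nuDual ν hνl q :=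
  LinearMap.ext fun p => congrArg ν (Bal.op_smul_tmul B p b q).symm

noncomputable def nuDualLinearMap : Q →ₗ[B] (P →ₗ[A] A) where
  toFun := nuDual ν hνl
  map_add' := nuDual_add ν hνl
  map_smul' := nuDual_smul ν hνl

variable [Module Aᵐᵒᵖ Q]

theorem nuDual_injective {ι : Type*} [Fintype ι] (q' : ι → Q) (p' : ι → P)
    (hq : ∀ q : Q, ∑ i, op (ν (Bal.tmul B (p' i) q)) • q' i = q) :
    Function.Injective (nuDual ν hνl) := fun q q'' h => by
  rw [← hq q, ← hq q'']
  exact Finset.sum_congr rfl fun i _ => congrArg (op · • q' i) (LinearMap.congr_fun h (p' i))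

variable [SMulCommClass B Aᵐᵒᵖ Q]
  (hνr : ∀ (a : A) (x : Bal B P Q), ν (op a • x) = ν x * a)
include hνr

theorem nuDual_op_smul (a : A) (q : Q) : nuDual ν hνl (op a • q) = op a • nuDual ν hνl q :=
  LinearMap.ext fun p => (congrArg ν (Bal.rsmul_tmul B (op a) p q).symm).trans (hνr a _)

theorem nuDual_surjective {ι : Type*} [Fintype ι] (q' : ι → Q) (p' : ι → P)
    (hp : ∀ p : P, ∑ i, ν (Bal.tmul B p (q' i)) • p' i = p) :
    Function.Surjective (nuDual ν hνl) := fun g => by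
  refine ⟨∑ i, op (g (p' i)) • q' i, LinearMap.ext fun p => ?_⟩
  calc nuDual ν hνl (∑ i, op (g (p' i)) • q' i) p
      = ∑ i, ν (Bal.tmul B p (q' i)) * g (p' i) := by
        change nuDualLinearMap ν hνl _ p = _
        rw [map_sum, LinearMap.sum_apply]
        exact Finset.sum_congr rfl fun i _ =>
          LinearMap.congr_fun (nuDual_op_smul ν hνl hνr _ (q' i)) p
    _ = g (∑ i, ν (Bal.tmul B p (q' i)) • p' i) := by
        simp only [map_sum, map_smul, smul_eq_mul]
    _ = g p := by rw [hp]

end NuDual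

end DualBases

theorem context_bimodule_is_frobenius_general
    {A B P Q : Type*} [Ring A] [Ring B]
    [AddCommGroup P] [Module A P] [Module Bᵐᵒᵖ P] [SMulCommClass A Bᵐᵒᵖ P]
    [AddCommGroup Q] [Module B Q] [Module Aᵐᵒᵖ Q] [SMulCommClass B Aᵐᵒᵖ Q]
    [Module.Finite A P] [Module.Projective A P]
    [Module.Finite Bᵐᵒᵖ P] [Module.Projective Bᵐᵒᵖ P]
    (ν : Bal B P Q →+ A)
    (hνl : ∀ (a : A) (x : Bal B P Q), ν (a • x) = a * ν x)
    (hνr : ∀ (a : A) (x : Bal B P Q), ν (op a • x) = ν x * a)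
    (μ : Bal A Q P →+ B)
    (hμl : ∀ (b : B) (y : Bal A Q P), μ (b • y) = b * μ y)
    (hμr : ∀ (b : B) (y : Bal A Q P), μ (op b • y) = μ y * b)
    (n : ℕ) (q' : Fin n → Q) (p' : Fin n → P)
    (adj1 : ∀ p : P, ∑ i, ν (Bal.tmul B p (q' i)) • p' i = p)
    (adj2 : ∀ q : Q, ∑ i, op (ν (Bal.tmul B (p' i) q)) • q' i = q)
    (k : ℕ) (pj : Fin k → P) (qj : Fin k → Q)
    (adj3 : ∀ q : Q, ∑ j, μ (Bal.tmul A q (pj j)) • qj j = q)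
    (adj4 : ∀ p : P, ∑ j, op (μ (Bal.tmul A (qj j) p)) • pj j = p)
    :
    (Module.Finite A P ∧ Module.Projective A P ∧
     Module.Finite Bᵐᵒᵖ P ∧ Module.Projective Bᵐᵒᵖ P) ∧
    (Function.Bijective (muDual μ hμr) ∧
      (∀ q q'' : Q, muDual μ hμr (q + q'') = muDual μ hμr q + muDual μ hμr q'') ∧
      (∀ (b : B) (q : Q), muDual μ hμr (b • q) = b • muDual μ hμr q) ∧
      (∀ (a : A) (q : Q), muDual μ hμr (op a • q) = op a • muDual μ hμr q)) ∧
    (Function.Bijective (nuDual ν hνl) ∧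
      (∀ q q'' : Q, nuDual ν hνl (q + q'') = nuDual ν hνl q + nuDual ν hνl q'') ∧
      (∀ (b : B) (q : Q), nuDual ν hνl (b • q) = b • nuDual ν hνl q) ∧
      (∀ (a : A) (q : Q), nuDual ν hνl (op a • q) = op a • nuDual ν hνl q)) ∧
    (∃ Θ : (P →ₗ[Bᵐᵒᵖ] B) → (P →ₗ[A] A),
      Function.Bijective Θ ∧
      (∀ f g : P →ₗ[Bᵐᵒᵖ] B, Θ (f + g) = Θ f + Θ g) ∧
      (∀ (b : B) (f : P →ₗ[Bᵐᵒᵖ] B), Θ (b • f) = b • Θ f) ∧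
      (∀ (a : Aᵐᵒᵖ) (f : P →ₗ[Bᵐᵒᵖ] B), Θ (a • f) = a • Θ f)) := by
  have hμ : Function.Bijective (muDual μ hμr) :=
    ⟨muDual_injective μ hμr pj qj adj3, muDual_surjective μ hμr hμl pj qj adj4⟩
  have hν : Function.Bijective (nuDual ν hνl) :=
    ⟨nuDual_injective ν hνl q' p' adj2, nuDual_surjective ν hνl hνr q' p' adj1⟩
  refine ⟨⟨‹_›, ‹_›, ‹_›, ‹_›⟩,
    ⟨hμ, muDual_add μ hμr, muDual_smul μ hμr hμl, muDual_op_smul μ hμr⟩,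
    ⟨hν, nuDual_add ν hνl, nuDual_smul ν hνl, nuDual_op_smul ν hνl hνr⟩, ?_⟩
  let eμ := LinearEquiv.ofBijective (muDualLinearMap μ hμr hμl) hμ
  let eν := LinearEquiv.ofBijective (nuDualLinearMap ν hνl) hν
  refine ⟨eμ.symm.trans eν, (eμ.symm.trans eν).bijective, map_add _, map_smul _,
    fun a f => ?_⟩
  obtain ⟨a, rfl⟩ := MulOpposite.op_surjective a
  obtain ⟨q, rfl⟩ := eμ.surjective f
  have hq : op a • eμ q = eμ (op a • q) := (muDual_op_smul μ hμr a q).symm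
  change eν (eμ.symm (op a • eμ q)) = op a • eν (eμ.symm (eμ q))
  rw [hq, eμ.symm_apply_apply, eμ.symm_apply_apply]
  exact nuDual_op_smul ν hνl hνr a q

/-- For symmetric separably equivalent rings with context `(P,Q,ν,μ)`,
the bimodule `P` is a Frobenius bimodule: it is left and right finite projective and
`q ↦ μ(q ⊗ -)`, `q ↦ ν(- ⊗ q)` are `B`-`A`-bimodule isomorphisms
`Hom_B(P_B, B_B) ≅ Q ≅ Hom_A({}_A P, {}_A A)`. -/
theorem context_bimodule_is_frobenius
    {A B P Q : Type*} [Ring A] [Ring B]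
    [AddCommGroup P] [Module A P] [Module Bᵐᵒᵖ P] [SMulCommClass A Bᵐᵒᵖ P]
    [AddCommGroup Q] [Module B Q] [Module Aᵐᵒᵖ Q] [SMulCommClass B Aᵐᵒᵖ Q]
    [Module.Finite A P] [Module.Projective A P]
    [Module.Finite Bᵐᵒᵖ P] [Module.Projective Bᵐᵒᵖ P]
    [Module.Finite B Q] [Module.Projective B Q]
    [Module.Finite Aᵐᵒᵖ Q] [Module.Projective Aᵐᵒᵖ Q]
    (ν : Bal B P Q →+ A)
    (hνl : ∀ (a : A) (x : Bal B P Q), ν (a • x) = a * ν x)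
    (hνr : ∀ (a : A) (x : Bal B P Q), ν (op a • x) = ν x * a)
    (hνsurj : Function.Surjective ν)
    (hνsplit : ∃ σ : A →+ Bal B P Q,
      (∀ (a c : A), σ (a * c) = a • σ c) ∧ (∀ (a c : A), σ (c * a) = op a • σ c) ∧
      ∀ a : A, ν (σ a) = a)
    (μ : Bal A Q P →+ B)
    (hμl : ∀ (b : B) (y : Bal A Q P), μ (b • y) = b * μ y)
    (hμr : ∀ (b : B) (y : Bal A Q P), μ (op b • y) = μ y * b)
    (hμsurj : Function.Surjective μ)
    (hμsplit : ∃ τ : B →+ Bal A Q P,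
      (∀ (b c : B), τ (b * c) = b • τ c) ∧ (∀ (b c : B), τ (c * b) = op b • τ c) ∧
      ∀ b : B, μ (τ b) = b)
    (n : ℕ) (q' : Fin n → Q) (p' : Fin n → P)
    (adj1 : ∀ p : P, ∑ i, ν (Bal.tmul B p (q' i)) • p' i = p)
    (adj2 : ∀ q : Q, ∑ i, op (ν (Bal.tmul B (p' i) q)) • q' i = q)
    (k : ℕ) (pj : Fin k → P) (qj : Fin k → Q)
    (adj3 : ∀ q : Q, ∑ j, μ (Bal.tmul A q (pj j)) • qj j = q)
    (adj4 : ∀ p : P, ∑ j, op (μ (Bal.tmul A (qj j) p)) • pj j = p)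
    :
    (Module.Finite A P ∧ Module.Projective A P ∧
     Module.Finite Bᵐᵒᵖ P ∧ Module.Projective Bᵐᵒᵖ P) ∧
    (Function.Bijective (muDual μ hμr) ∧
      (∀ q q'' : Q, muDual μ hμr (q + q'') = muDual μ hμr q + muDual μ hμr q'') ∧
      (∀ (b : B) (q : Q), muDual μ hμr (b • q) = b • muDual μ hμr q) ∧
      (∀ (a : A) (q : Q), muDual μ hμr (op a • q) = op a • muDual μ hμr q)) ∧
    (Function.Bijective (nuDual ν hνl) ∧
      (∀ q q'' : Q, nuDual ν hνl (q + q'') = nuDual ν hνl q + nuDual ν hνl q'') ∧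
      (∀ (b : B) (q : Q), nuDual ν hνl (b • q) = b • nuDual ν hνl q) ∧
      (∀ (a : A) (q : Q), nuDual ν hνl (op a • q) = op a • nuDual ν hνl q)) ∧
    (∃ Θ : (P →ₗ[Bᵐᵒᵖ] B) → (P →ₗ[A] A),
      Function.Bijective Θ ∧
      (∀ f g : P →ₗ[Bᵐᵒᵖ] B, Θ (f + g) = Θ f + Θ g) ∧
      (∀ (b : B) (f : P →ₗ[Bᵐᵒᵖ] B), Θ (b • f) = b • Θ f) ∧
      (∀ (a : Aᵐᵒᵖ) (f : P →ₗ[Bᵐᵒᵖ] B), Θ (a • f) = a • Θ f)) :=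
  context_bimodule_is_frobenius_general ν hνl hνr μ hμl hμr n q' p' adj1 adj2 k pj qj adj3 adj4
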